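/- arXiv:1801.01816 — 5 statements merged into one kernel-verified Lean document; each statement's English description precedes it below -/
import Mathlib

section
/- In a standard Pólya urn initialized with $k$ red and $\ell-k$ blue balls (where $1 \le k \le \ell-1$), the proportion of red balls after $n$ draws converges in distribution, as $n \to \infty$, to a Beta$(k, \ell-k)$ random variable. -/
open MeasureTheory Filter

/-- One step of the standard Pólya urn: if the urn currently contains `r` red balls out of
`t` balls in total, a ball is drawn uniformly at random (so it is red with probability `r/t`)
and replaced together with an additional ball of the same colour; we track the red count. -/
noncomputable def polyaStep (t r : ℕ) : PMF ℕ :=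
  (PMF.bernoulli (min ((r : ENNReal) / (t : ENNReal)) 1).toNNReal
    (by simpa using ENNReal.toNNReal_mono ENNReal.one_ne_top (min_le_right _ _))).map
    fun b => if b then r + 1 else r

/-- Red-ball count of a standard Pólya urn after `n` draws, started from `k` red balls and
`t` balls in total. -/
noncomputable def polya (k t : ℕ) : ℕ → PMF ℕ
  | 0 => PMF.pure k
  | n + 1 => (polya k t n).bind fun r => polyaStep (t + n) r

/-- The Beta distribution with positive integer parameters `a`, `b`:
density `(a+b-1)!/((a-1)!(b-1)!) · x^(a-1) (1-x)^(b-1)` on `(0,1)`. -/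
noncomputable def betaMeasure (a b : ℕ) : Measure ℝ :=
  (volume.restrict (Set.Ioo (0 : ℝ) 1)).withDensity fun x =>
    ENNReal.ofReal
      ((Nat.factorial (a + b - 1) : ℝ) / (Nat.factorial (a - 1) * Nat.factorial (b - 1)) *
        x ^ (a - 1) * (1 - x) ^ (b - 1))

/-!
The law of the urn is a Beta mixture of binomials. Started from `a` red and `b` blue balls, the
red count after `n` draws is `a + i` with probability `C(n,i) a⁽ⁱ⁾ b⁽ⁿ⁻ⁱ⁾ / (a+b)⁽ⁿ⁾` (rising
factorials, by induction over the draws), and by the Beta integral this equals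
`∫ C(n,i) xⁱ (1-x)ⁿ⁻ⁱ dβ(x)` for `β = Beta(a, b)`. Hence the expectation of `f (R_n / (a+b+n))`
is `∫ B_n dβ`, where `B_n` is the Bernstein polynomial of `f` with the nodes `i/n` moved to
`(a+i)/(a+b+n)`. The nodes move by at most `(a+b)/(a+b+n) → 0`, so `B_n → f` uniformly on
`[0,1]` as for the classical Bernstein approximation, and dominated convergence concludes.
-/

open scoped Nat ENNReal

lemma support_polyaStep_subset (t s : ℕ) : (polyaStep t s).support ⊆ {s, s + 1} := by
  rw [polyaStep, PMF.support_map]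
  rintro _ ⟨b, -, rfl⟩
  cases b <;> simp

lemma support_polya_subset (k t n : ℕ) : (polya k t n).support ⊆ Set.Icc k (k + n) := by
  induction n with
  | zero => simp [polya]
  | succ n ih =>
    intro r hr
    rw [polya, PMF.mem_support_bind_iff] at hr
    obtain ⟨s, hs, hr⟩ := hr
    have hs' := ih hs
    have hr' := support_polyaStep_subset _ _ hr
    simp only [Set.mem_Icc, Set.mem_insert_iff, Set.mem_singleton_iff] at hs' hr' ⊢
    omega

lemma polya_apply_eq_zero {k t n r : ℕ} (h : r ∉ Set.Icc k (k + n)) : polya k t n r = 0 :=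
  (PMF.apply_eq_zero_iff _ _).2 fun hr => h (support_polya_subset k t n hr)

lemma polyaStep_apply (t s r : ℕ) :
    polyaStep t s r = (if r = s then 1 - min ((s : ℝ≥0∞) / t) 1 else 0) +
      (if r = s + 1 then min ((s : ℝ≥0∞) / t) 1 else 0) := by
  rw [polyaStep, PMF.map_apply, tsum_bool]
  simp [PMF.bernoulli, PMF.ofFintype_apply,
    ENNReal.coe_toNNReal (ne_top_of_le_ne_top ENNReal.one_ne_top (min_le_right _ _))]

lemma polya_succ_apply (k t n r : ℕ) :
    polya k t (n + 1) (r + 1) = polya k t n r * min ((r : ℝ≥0∞) / (t + n : ℕ)) 1 +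
      polya k t n (r + 1) * (1 - min (((r + 1 : ℕ) : ℝ≥0∞) / (t + n : ℕ)) 1) := by
  rw [polya, PMF.bind_apply, tsum_eq_sum (s := {r, r + 1}), Finset.sum_pair (by omega)]
  · simp [polyaStep_apply]
  · intro s hs
    simp only [Finset.mem_insert, Finset.mem_singleton, not_or] at hs
    rw [polyaStep_apply, if_neg (by omega), if_neg (by omega), add_zero, mul_zero]

lemma toReal_min_div_one {s t : ℕ} (h : s ≤ t) :
    (min ((s : ℝ≥0∞) / t) 1).toReal = s / t := by
  rw [min_eq_left (ENNReal.div_le_of_le_mul (by rw [one_mul]; exact_mod_cast h)),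
    ENNReal.toReal_div, ENNReal.toReal_natCast, ENNReal.toReal_natCast]

lemma polya_succ_apply_toReal {k t n r : ℕ} (h : r + 1 ≤ t + n) :
    (polya k t (n + 1) (r + 1)).toReal =
      (polya k t n r).toReal * (r / (t + n)) +
        (polya k t n (r + 1)).toReal * (1 - (r + 1) / (t + n)) := by
  rw [polya_succ_apply, ENNReal.toReal_add
    (ENNReal.mul_ne_top (PMF.apply_ne_top _ _) (by simp))
    (ENNReal.mul_ne_top (PMF.apply_ne_top _ _) (by simp)), ENNReal.toReal_mul,
    ENNReal.toReal_mul, ENNReal.toReal_sub_of_le (min_le_right _ _) ENNReal.one_ne_top,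
    toReal_min_div_one (by omega), toReal_min_div_one h]
  push_cast
  rfl

lemma Nat.ascFactorial_pos_of_pos {n : ℕ} (hn : 0 < n) (k : ℕ) : 0 < n.ascFactorial k := by
  obtain ⟨m, rfl⟩ : ∃ m, n = m + 1 := ⟨n - 1, by omega⟩
  exact Nat.ascFactorial_pos m k

/-- The probability that the first `i + d` draws give one prescribed sequence of `i` red and
`d` blue balls. -/
noncomputable def polyaWeight (a b i d : ℕ) : ℝ :=
  a.ascFactorial i * b.ascFactorial d / (a + b).ascFactorial (i + d)

lemma polyaWeight_zero (a b : ℕ) : polyaWeight a b 0 0 = 1 := by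
  simp [polyaWeight]

lemma polyaWeight_succ_left {a b : ℕ} (hab : 0 < a + b) (i d : ℕ) :
    polyaWeight a b (i + 1) d = polyaWeight a b i d * ((a + i) / (a + b + (i + d))) := by
  have : (0 : ℝ) < (a + b).ascFactorial (i + d) := mod_cast Nat.ascFactorial_pos_of_pos hab _
  rw [polyaWeight, polyaWeight, Nat.ascFactorial_succ, add_right_comm, Nat.ascFactorial_succ]
  push_cast
  field_simp

lemma polyaWeight_succ_right {a b : ℕ} (hab : 0 < a + b) (i d : ℕ) :
    polyaWeight a b i (d + 1) = polyaWeight a b i d * ((b + d) / (a + b + (i + d))) := by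
  have : (0 : ℝ) < (a + b).ascFactorial (i + d) := mod_cast Nat.ascFactorial_pos_of_pos hab _
  rw [polyaWeight, polyaWeight, Nat.ascFactorial_succ, ← add_assoc, Nat.ascFactorial_succ]
  push_cast
  field_simp

lemma choose_mul_polyaWeight_succ_succ {a b : ℕ} (hab : 0 < a + b) (i d : ℕ) :
    ((i + d + 1 + 1).choose (i + 1) : ℝ) * polyaWeight a b (i + 1) (d + 1) =
      (i + d + 1).choose i * polyaWeight a b i (d + 1) * ((a + i) / (a + b + (i + d + 1))) +
        (i + d + 1).choose (i + 1) * polyaWeight a b (i + 1) d *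
          (1 - (a + i + 1) / (a + b + (i + d + 1))) := by
  rw [polyaWeight_succ_right hab (i + 1), polyaWeight_succ_left hab i d,
    polyaWeight_succ_right hab i d, Nat.choose_succ_succ]
  have : (0 : ℝ) < a + b + (i + d) := add_pos_of_pos_of_nonneg (mod_cast hab) (by positivity)
  push_cast
  field_simp
  ring

theorem polya_apply_toReal {a b : ℕ} (ha : 0 < a) (hb : 0 < b) (i d : ℕ) :
    (polya a (a + b) (i + d) (a + i)).toReal = (i + d).choose i * polyaWeight a b i d := by
  suffices ∀ n i d, i + d = n →
      (polya a (a + b) n (a + i)).toReal = n.choose i * polyaWeight a b i d from this _ i d rfl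
  intro n
  induction n with
  | zero =>
    intro i d hn
    obtain ⟨rfl, rfl⟩ : i = 0 ∧ d = 0 := by omega
    simp [polya, polyaWeight_zero]
  | succ n ih =>
    rintro (_ | i) d hn
    · obtain rfl : d = n + 1 := by omega
      have ih := ih 0 n (by simp)
      rw [add_zero] at ih ⊢
      rw [← Nat.sub_add_cancel ha, polya_succ_apply_toReal (by omega),
        polya_apply_eq_zero (by simp), ENNReal.toReal_zero, zero_mul, zero_add,
        Nat.sub_add_cancel ha, ih, polyaWeight_succ_right (by omega)]
      have : (0 : ℝ) < a + b + n := by positivity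
      simp only [Nat.choose_zero_right]
      push_cast [Nat.cast_pred ha]
      field_simp
      ring
    · rw [← add_assoc, polya_succ_apply_toReal (by omega)]
      rcases d with _ | d
      · obtain rfl : n = i := by omega
        rw [polya_apply_eq_zero (r := a + n + 1) (by simp), ih n 0 (by omega),
          polyaWeight_succ_left (by omega)]
        have : (0 : ℝ) < a + b + n := by positivity
        simp only [Nat.choose_self, ENNReal.toReal_zero, zero_mul, add_zero]
        push_cast
        field_simp
        ring
      · rw [ih i (d + 1) (by omega), add_assoc a i 1, ih (i + 1) d (by omega)]
        obtain rfl : n = i + d + 1 := by omega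
        push_cast
        linear_combination (choose_mul_polyaWeight_succ_succ (a := a) (b := b) (by omega) i d).symm

theorem integral_pow_mul_one_sub_pow (a b : ℕ) :
    ∫ x in (0:ℝ)..1, x ^ a * (1 - x) ^ b = (a ! * b ! / (a + b + 1)! : ℝ) := by
  apply Complex.ofReal_injective
  have hβ := Complex.betaIntegral_eq_Gamma_mul_div (a + 1) (b + 1)
    (by norm_cast; omega) (by norm_cast; omega)
  rw [show (a + 1 : ℂ) + (b + 1) = (a + b + 1 : ℕ) + 1 by push_cast; ring,
    Complex.Gamma_nat_eq_factorial, Complex.Gamma_nat_eq_factorial,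
    Complex.Gamma_nat_eq_factorial, Complex.betaIntegral] at hβ
  simp only [add_sub_cancel_right, Complex.cpow_natCast] at hβ
  rw [← intervalIntegral.integral_ofReal]
  push_cast
  exact hβ

noncomputable def betaDensity (a b : ℕ) (x : ℝ) : ℝ :=
  (Nat.factorial (a + b - 1) : ℝ) / (Nat.factorial (a - 1) * Nat.factorial (b - 1)) *
    x ^ (a - 1) * (1 - x) ^ (b - 1)

lemma betaDensity_nonneg (a b : ℕ) {x : ℝ} (hx : x ∈ Set.Icc (0 : ℝ) 1) :
    0 ≤ betaDensity a b x := by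
  have := sub_nonneg.2 hx.2
  have := hx.1
  unfold betaDensity
  positivity

lemma continuous_betaDensity (a b : ℕ) : Continuous (betaDensity a b) := by
  unfold betaDensity
  fun_prop

lemma betaMeasure_eq_withDensity (a b : ℕ) :
    betaMeasure a b = (volume.restrict (Set.Ioo (0 : ℝ) 1)).withDensity
      fun x => ENNReal.ofReal (betaDensity a b x) := rfl

lemma integral_betaMeasure (a b : ℕ) (g : ℝ → ℝ) :
    ∫ x, g x ∂betaMeasure a b = ∫ x in Set.Ioo (0 : ℝ) 1, betaDensity a b x * g x := by
  rw [betaMeasure_eq_withDensity, integral_withDensity_eq_integral_toReal_smul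
    (continuous_betaDensity a b).measurable.ennreal_ofReal
    (.of_forall fun _ => ENNReal.ofReal_lt_top)]
  refine setIntegral_congr_fun measurableSet_Ioo fun x hx => ?_
  rw [ENNReal.toReal_ofReal (betaDensity_nonneg a b (Set.Ioo_subset_Icc_self hx)), smul_eq_mul]

lemma integral_betaDensity_mul_pow_mul_one_sub_pow {a b : ℕ} (ha : 0 < a) (hb : 0 < b)
    (i d : ℕ) :
    ∫ x in Set.Ioo (0 : ℝ) 1, betaDensity a b x * (x ^ i * (1 - x) ^ d) =
      polyaWeight a b i d := by
  obtain ⟨α, rfl⟩ : ∃ α, a = α + 1 := ⟨a - 1, by omega⟩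
  obtain ⟨β, rfl⟩ : ∃ β, b = β + 1 := ⟨b - 1, by omega⟩
  have hfac (m j : ℕ) : (m ! : ℝ) * (m + 1).ascFactorial j = (m + j)! := by
    exact_mod_cast Nat.factorial_mul_ascFactorial m j
  have hρ (x : ℝ) : betaDensity (α + 1) (β + 1) x * (x ^ i * (1 - x) ^ d) =
      (α + β + 1)! / (α ! * β !) * (x ^ (α + i) * (1 - x) ^ (β + d)) := by
    simp only [betaDensity, Nat.add_sub_cancel, show α + 1 + (β + 1) - 1 = α + β + 1 by omega]
    ring
  simp only [hρ]
  rw [integral_const_mul, ← integral_Ioc_eq_integral_Ioo, ← intervalIntegral.integral_of_le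
    zero_le_one, integral_pow_mul_one_sub_pow, polyaWeight, ← hfac α, ← hfac β,
    show α + i + (β + d) + 1 = α + β + 1 + (i + d) by ring, ← hfac (α + β + 1) (i + d),
    show α + 1 + (β + 1) = α + β + 1 + 1 by ring]
  field_simp

lemma isProbabilityMeasure_betaMeasure {a b : ℕ} (ha : 0 < a) (hb : 0 < b) :
    IsProbabilityMeasure (betaMeasure a b) := by
  have h := integral_betaMeasure a b fun _ => 1
  rw [integral_const, smul_eq_mul, mul_one, measureReal_def] at h
  have h1 := integral_betaDensity_mul_pow_mul_one_sub_pow ha hb 0 0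
  simp only [pow_zero, mul_one, polyaWeight_zero] at h h1
  exact ⟨(ENNReal.toReal_eq_one_iff _).1 (h.trans h1)⟩

lemma ae_mem_Ioo_betaMeasure (a b : ℕ) : ∀ᵐ x ∂betaMeasure a b, x ∈ Set.Ioo (0 : ℝ) 1 :=
  (withDensity_absolutelyContinuous _ _).ae_le (ae_restrict_mem measurableSet_Ioo)

lemma integrable_betaMeasure_of_continuous {a b : ℕ} (ha : 0 < a) (hb : 0 < b) {g : ℝ → ℝ}
    (hg : Continuous g) : Integrable g (betaMeasure a b) := by
  have := isProbabilityMeasure_betaMeasure ha hb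
  rw [← Measure.restrict_eq_self_of_ae_mem
    ((ae_mem_Ioo_betaMeasure a b).mono fun _ => Set.mem_Icc_of_Ioo)]
  exact hg.continuousOn.integrableOn_compact isCompact_Icc

theorem PMF.integral_eq_sum_of_support_subset {α E : Type*} [MeasurableSpace α]
    [MeasurableSingletonClass α] [NormedAddCommGroup E] [NormedSpace ℝ E] [CompleteSpace E]
    (p : PMF α) {s : Finset α} (hs : p.support ⊆ s) (f : α → E) :
    ∫ a, f a ∂p.toMeasure = ∑ a ∈ s, (p a).toReal • f a := by
  have hae : ∀ᵐ a ∂p.toMeasure, a ∈ (s : Set α) := by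
    change p.toMeasure (↑s)ᶜ = 0
    rw [p.toMeasure_apply_eq_zero_iff s.measurableSet.compl]
    exact Set.disjoint_left.2 fun a ha ha' => ha' (hs ha)
  rw [← Measure.restrict_eq_self_of_ae_mem hae, setIntegral_finset s (.of_finite s.finite_toSet)]
  refine Finset.sum_congr rfl fun a _ => ?_
  rw [measureReal_def, p.toMeasure_apply_singleton a (.singleton a)]

noncomputable def bernsteinSum (n : ℕ) (F : ℕ → ℝ) (x : ℝ) : ℝ :=
  ∑ i ∈ Finset.range (n + 1), (bernsteinPolynomial ℝ n i).eval x * F i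

lemma continuous_bernsteinSum (n : ℕ) (F : ℕ → ℝ) : Continuous (bernsteinSum n F) := by
  unfold bernsteinSum
  fun_prop

lemma bernsteinSum_eq_sum_bernstein (n : ℕ) (F : ℕ → ℝ) (x : unitInterval) :
    bernsteinSum n F x = ∑ k : Fin (n + 1), bernstein n k x * F k := by
  rw [bernsteinSum, Finset.sum_range]
  rfl

lemma abs_bernsteinSum_le {n : ℕ} {F : ℕ → ℝ} {C : ℝ} (hF : ∀ i, |F i| ≤ C) {x : ℝ}
    (hx : x ∈ Set.Icc (0 : ℝ) 1) : |bernsteinSum n F x| ≤ C := by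
  rw [show x = ((⟨x, hx⟩ : unitInterval) : ℝ) from rfl, bernsteinSum_eq_sum_bernstein]
  calc |∑ k : Fin (n + 1), bernstein n k ⟨x, hx⟩ * F k|
      ≤ ∑ k : Fin (n + 1), bernstein n k ⟨x, hx⟩ * C := by
        refine (Finset.abs_sum_le_sum_abs _ _).trans (Finset.sum_le_sum fun k _ => ?_)
        rw [abs_mul, abs_of_nonneg bernstein_nonneg]
        exact mul_le_mul_of_nonneg_left (hF k) bernstein_nonneg
    _ = C := by rw [← Finset.sum_mul, bernstein.probability, one_mul]

lemma polya_apply_toReal_eq_integral {a b : ℕ} (ha : 0 < a) (hb : 0 < b) {n i : ℕ}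
    (hi : i ≤ n) :
    (polya a (a + b) n (a + i)).toReal =
      ∫ x, (bernsteinPolynomial ℝ n i).eval x ∂betaMeasure a b := by
  obtain ⟨d, rfl⟩ : ∃ d, n = i + d := ⟨n - i, by omega⟩
  rw [polya_apply_toReal ha hb, integral_betaMeasure,
    ← integral_betaDensity_mul_pow_mul_one_sub_pow ha hb, ← integral_const_mul]
  refine setIntegral_congr_fun measurableSet_Ioo fun x _ => ?_
  simp only [bernsteinPolynomial, Polynomial.eval_mul, Polynomial.eval_pow, Polynomial.eval_natCast,
    Polynomial.eval_X, Polynomial.eval_sub, Polynomial.eval_one, Nat.add_sub_cancel_left]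
  ring

theorem integral_polya_eq_integral_bernsteinSum {a b : ℕ} (ha : 0 < a) (hb : 0 < b) (n : ℕ)
    (F : ℕ → ℝ) :
    ∫ r, F r ∂(polya a (a + b) n).toMeasure =
      ∫ x, bernsteinSum n (fun i => F (a + i)) x ∂betaMeasure a b := by
  rw [PMF.integral_eq_sum_of_support_subset _ (s := Finset.Icc a (a + n))
      (by simpa using support_polya_subset a (a + b) n),
    ← Finset.Ico_add_one_right_eq_Icc, Finset.sum_Ico_eq_sum_range]
  unfold bernsteinSum
  rw [integral_finsetSum _ fun i _ => (integrable_betaMeasure_of_continuous ha hb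
      (Polynomial.continuous _)).mul_const _]
  refine Finset.sum_congr (by congr 1; omega) fun i hi => ?_
  rw [integral_mul_const, smul_eq_mul,
    polya_apply_toReal_eq_integral ha hb (Nat.lt_succ_iff.1 (Finset.mem_range.1 hi))]

open unitInterval in
theorem tendstoUniformly_sum_bernstein_mul_comp (g : C(I, ℝ))
    (z : (n : ℕ) → Fin (n + 1) → I)
    (hz : ∀ δ > 0, ∀ᶠ n in atTop, ∀ k, dist (z n k) (bernstein.z k) < δ) :
    TendstoUniformly (fun n x => ∑ k : Fin (n + 1), bernstein n k x * g (z n k)) g atTop := by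
  rw [Metric.tendstoUniformly_iff]
  intro ε hε
  obtain ⟨δ, hδ, hgδ⟩ := Metric.uniformContinuous_iff.1
    (CompactSpace.uniformContinuous_of_continuous g.continuous) (ε / 2) (half_pos hε)
  filter_upwards [hz δ hδ, Metric.tendsto_nhds.1 (bernsteinApproximation_uniform g) (ε / 2)
    (half_pos hε)] with n hzn hBn x
  have hnodes : dist (bernsteinApproximation n g x)
      (∑ k : Fin (n + 1), bernstein n k x * g (z n k)) ≤ ε / 2 := by
    rw [bernsteinApproximation.apply, Real.dist_eq, ← Finset.sum_sub_distrib]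
    calc |∑ k : Fin (n + 1),
          (bernstein n k x • g (bernstein.z k) - bernstein n k x * g (z n k))|
        ≤ ∑ k : Fin (n + 1), bernstein n k x * (ε / 2) := by
          refine (Finset.abs_sum_le_sum_abs _ _).trans (Finset.sum_le_sum fun k _ => ?_)
          rw [smul_eq_mul, ← mul_sub, abs_mul, abs_of_nonneg bernstein_nonneg]
          exact mul_le_mul_of_nonneg_left ((hgδ (hzn k)).le.trans' (by
            rw [Real.dist_eq, abs_sub_comm])) bernstein_nonneg
      _ = ε / 2 := by rw [← Finset.sum_mul, bernstein.probability, one_mul]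
  calc dist (g x) (∑ k : Fin (n + 1), bernstein n k x * g (z n k))
      ≤ dist (g x) (bernsteinApproximation n g x) + ε / 2 :=
        (dist_triangle _ (bernsteinApproximation n g x) _).trans (by gcongr)
    _ < ε / 2 + ε / 2 := by
        gcongr
        rw [dist_comm]
        exact (ContinuousMap.dist_apply_le_dist x).trans_lt hBn
    _ = ε := add_halves ε

lemma abs_add_div_add_sub_div_le {a ℓ k n : ℝ} (ha : 0 ≤ a) (haℓ : a ≤ ℓ) (hk : 0 ≤ k)
    (hkn : k ≤ n) (hn : 0 < n) : |(a + k) / (ℓ + n) - k / n| ≤ ℓ / (ℓ + n) := by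
  have hℓn : 0 < ℓ + n := by linarith
  have hnum : |(a + k) * n - (ℓ + n) * k| ≤ ℓ * n :=
    abs_le.2 ⟨by nlinarith, by nlinarith⟩
  rw [div_sub_div _ _ hℓn.ne' hn.ne', abs_div, abs_of_pos (mul_pos hℓn hn)]
  calc |(a + k) * n - (ℓ + n) * k| / ((ℓ + n) * n) ≤ ℓ * n / ((ℓ + n) * n) := by gcongr
    _ = ℓ / (ℓ + n) := by field_simp

theorem tendsto_bernsteinSum_shifted {f : ℝ → ℝ} (hf : Continuous f) {a ℓ : ℕ}
    (haℓ : a ≤ ℓ) {x : ℝ} (hx : x ∈ Set.Icc (0 : ℝ) 1) :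
    Tendsto (fun n : ℕ => bernsteinSum n (fun i => f ((a + i : ℕ) / ((ℓ : ℝ) + n))) x) atTop
      (nhds (f x)) := by
  have hnode (n : ℕ) (k : Fin (n + 1)) : ((a + k : ℕ) : ℝ) / (ℓ + n) ∈ unitInterval := by
    have : ((a + k : ℕ) : ℝ) ≤ ℓ + n :=
      mod_cast Nat.add_le_add haℓ (Nat.lt_succ_iff.1 k.2)
    exact ⟨by positivity, div_le_one_of_le₀ this (by positivity)⟩
  have hsmall : Tendsto (fun n : ℕ => (ℓ : ℝ) / (ℓ + n)) atTop (nhds 0) :=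
    tendsto_const_nhds.div_atTop (tendsto_atTop_add_const_left _ _ tendsto_natCast_atTop_atTop)
  have hz : ∀ δ > 0, ∀ᶠ n in atTop, ∀ k : Fin (n + 1),
      dist (⟨_, hnode n k⟩ : unitInterval) (bernstein.z k) < δ := by
    intro δ hδ
    filter_upwards [hsmall.eventually (gt_mem_nhds hδ), eventually_gt_atTop 0] with n hn hn0 k
    refine lt_of_le_of_lt ?_ hn
    rw [Subtype.dist_eq, Real.dist_eq]
    change |((a + k : ℕ) : ℝ) / (ℓ + n) - (k : ℕ) / n| ≤ _
    rw [Nat.cast_add]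
    exact abs_add_div_add_sub_div_le (by positivity) (by exact_mod_cast haℓ) (by positivity)
      (by exact_mod_cast Nat.lt_succ_iff.1 k.2) (by exact_mod_cast hn0)
  exact ((tendstoUniformly_sum_bernstein_mul_comp ⟨fun y : unitInterval => f y, by fun_prop⟩ _
    hz).tendsto_at ⟨x, hx⟩).congr fun n => (bernsteinSum_eq_sum_bernstein n _ ⟨x, hx⟩).symm

theorem stmt2_general (k ℓ : ℕ) (hk : 1 ≤ k) (hkℓ : k ≤ ℓ - 1)
    (f : BoundedContinuousFunction ℝ ℝ) :
    Tendsto (fun n => ∫ r : ℕ, f ((r : ℝ) / ((ℓ : ℝ) + n)) ∂(polya k ℓ n).toMeasure)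
      atTop (nhds (∫ x, f x ∂betaMeasure k (ℓ - k))) := by
  obtain ⟨b, rfl⟩ : ∃ b, ℓ = k + b := ⟨ℓ - k, by omega⟩
  have hb : 0 < b := by omega
  have := isProbabilityMeasure_betaMeasure hk hb
  simp only [integral_polya_eq_integral_bernsteinSum hk hb, Nat.add_sub_cancel_left]
  refine tendsto_integral_of_dominated_convergence (fun _ => ‖f‖)
    (fun n => (continuous_bernsteinSum n _).aestronglyMeasurable) (integrable_const _)
    (fun n => (ae_mem_Ioo_betaMeasure k b).mono fun x hx => ?_)
    ((ae_mem_Ioo_betaMeasure k b).mono fun x hx =>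
      tendsto_bernsteinSum_shifted f.continuous (Nat.le_add_right k b) (Set.mem_Icc_of_Ioo hx))
  exact abs_bernsteinSum_le (fun i => f.norm_coe_le_norm _) (Set.mem_Icc_of_Ioo hx)

/-- In a standard Pólya urn initialized with `k` red and `ℓ - k` blue balls
(`1 ≤ k ≤ ℓ - 1`), the proportion of red balls after `n` draws (out of `ℓ + n` balls in total)
converges in distribution, as `n → ∞`, to a `Beta(k, ℓ-k)` random variable. -/
theorem stmt2 (k ℓ : ℕ) (hk : 1 ≤ k) (hkℓ : k ≤ ℓ - 1) (hℓ : 2 ≤ ℓ)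
    (f : BoundedContinuousFunction ℝ ℝ) :
    Tendsto (fun n => ∫ r : ℕ, f ((r : ℝ) / ((ℓ : ℝ) + n)) ∂(polya k ℓ n).toMeasure)
      atTop (nhds (∫ x, f x ∂betaMeasure k (ℓ - k))) :=
  stmt2_general k ℓ hk hkℓ f
end

section
/- Let $X \sim$ Beta$(\gamma\ell, \ell - \gamma\ell)$ with $\gamma\ell$ a positive integer and $\gamma \in (0,1)$, and let $t = \gamma/e^2$. Then $\mathbb{P}\{X \le t\} \le (t\ell)^{\gamma\ell}/(\gamma\ell)! \le (e\ell t/(\gamma\ell))^{\gamma\ell} \le e^{-\gamma\ell}$. -/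
/-!
On `[0, t]` drop the factor `(1 - x)^(b-1) ≤ 1` of the Beta density and integrate
`x^(a-1)`; with `ℓ = a + b` the normalising constant divided by `a` is
`(ℓ-1)(ℓ-2)⋯(ℓ-a) / a! ≤ ℓ^a / a!`. The middle inequality is `a! ≥ (a/e)^a`, and for
`t = (k/ℓ)/e²` the base `eℓt/k` is exactly `e⁻¹`.
-/

open MeasureTheory

open Set Real
open scoped Nat

theorem betaMeasure_Iic_le {a b : ℕ} (ha : 1 ≤ a) {t : ℝ} (ht : 0 ≤ t) :
    betaMeasure a b (Iic t) ≤
      ENNReal.ofReal ((a + b - 1)! / ((a - 1)! * (b - 1)!) * (t ^ a / a)) := by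
  set C : ℝ := (a + b - 1)! / ((a - 1)! * (b - 1)!)
  have hC : 0 ≤ C := by positivity
  calc betaMeasure a b (Iic t)
      = ∫⁻ x in Iic t ∩ Ioo 0 1, ENNReal.ofReal (C * x ^ (a - 1) * (1 - x) ^ (b - 1)) := by
        rw [betaMeasure, withDensity_apply _ measurableSet_Iic,
          Measure.restrict_restrict measurableSet_Iic]
    _ ≤ ∫⁻ x in Iic t ∩ Ioo 0 1, ENNReal.ofReal (C * x ^ (a - 1)) := by
        refine setLIntegral_mono (by fun_prop) fun x hx ↦ ENNReal.ofReal_le_ofReal ?_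
        have hx0 : 0 < x := hx.2.1
        have : (1 - x) ^ (b - 1) ≤ 1 := pow_le_one₀ (by linarith [hx.2.2]) (by linarith)
        exact mul_le_of_le_one_right (by positivity) this
    _ ≤ ∫⁻ x in Ioc 0 t, ENNReal.ofReal (C * x ^ (a - 1)) := by
        have : Iic t ∩ Ioo 0 1 ⊆ Ioc 0 t := fun x hx ↦ ⟨hx.2.1, hx.1⟩
        exact lintegral_mono' (Measure.restrict_mono this le_rfl) le_rfl
    _ = ENNReal.ofReal (∫ x in Ioc 0 t, C * x ^ (a - 1)) := by
        refine (ofReal_integral_eq_lintegral_ofReal (by fun_prop : Continuous _).integrableOn_Ioc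
          ((ae_restrict_iff' measurableSet_Ioc).2 (.of_forall fun x hx ↦ ?_))).symm
        have := hx.1.le
        positivity
    _ = ENNReal.ofReal (C * (t ^ a / a)) := by
        rw [← intervalIntegral.integral_of_le ht, intervalIntegral.integral_const_mul,
          integral_pow, Nat.sub_add_cancel ha, zero_pow (by omega), Nat.cast_sub ha]
        push_cast
        ring_nf

theorem factorial_div_factorial_mul_factorial_div_le {a b : ℕ} (ha : 1 ≤ a) (hb : 1 ≤ b) :
    ((a + b - 1)! / ((a - 1)! * (b - 1)!) : ℝ) / a ≤ ((a + b : ℕ) : ℝ) ^ a / a ! := by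
  have hfact : (b - 1)! * (a + b - 1).descFactorial a = (a + b - 1)! := by
    have := Nat.factorial_mul_descFactorial (show a ≤ a + b - 1 by omega)
    rwa [show a + b - 1 - a = b - 1 by omega] at this
  have hdesc : ((a + b - 1).descFactorial a : ℝ) ≤ ((a + b : ℕ) : ℝ) ^ a := by
    exact_mod_cast (Nat.descFactorial_le_pow _ _).trans (Nat.pow_le_pow_left (by omega) a)
  have ha! : (a ! : ℝ) = a * (a - 1)! := by
    exact_mod_cast (Nat.mul_factorial_pred (by omega)).symm
  calc ((a + b - 1)! / ((a - 1)! * (b - 1)!) : ℝ) / a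
      = (a + b - 1).descFactorial a / a ! := by
        rw [← hfact, ha!]
        push_cast
        field_simp
    _ ≤ ((a + b : ℕ) : ℝ) ^ a / a ! := by gcongr

theorem betaMeasure_Iic_le_pow_div_factorial {a b : ℕ} (ha : 1 ≤ a) (hb : 1 ≤ b) {t : ℝ}
    (ht : 0 ≤ t) :
    betaMeasure a b (Iic t) ≤ ENNReal.ofReal ((t * ((a + b : ℕ) : ℝ)) ^ a / a !) := by
  refine (betaMeasure_Iic_le ha ht).trans (ENNReal.ofReal_le_ofReal ?_)
  calc ((a + b - 1)! / ((a - 1)! * (b - 1)!) : ℝ) * (t ^ a / a)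
      = ((a + b - 1)! / ((a - 1)! * (b - 1)!) : ℝ) / a * t ^ a := by ring
    _ ≤ ((a + b : ℕ) : ℝ) ^ a / a ! * t ^ a :=
        mul_le_mul_of_nonneg_right (factorial_div_factorial_mul_factorial_div_le ha hb)
          (by positivity)
    _ = (t * ((a + b : ℕ) : ℝ)) ^ a / a ! := by ring

theorem pow_div_factorial_le_exp_one_mul_div_pow {x : ℝ} (hx : 0 ≤ x) (n : ℕ) :
    x ^ n / n ! ≤ (exp 1 * x / n) ^ n := by
  rcases Nat.eq_zero_or_pos n with rfl | hn
  · simp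
  have hn' : (0 : ℝ) < n := by exact_mod_cast hn
  calc x ^ n / n ! = (x / n) ^ n * ((n : ℝ) ^ n / n !) := by
        rw [div_pow]
        field_simp
    _ ≤ (x / n) ^ n * exp n := by
        gcongr
        exact pow_div_factorial_le_exp _ hn'.le n
    _ = (exp 1 * x / n) ^ n := by
        rw [← exp_one_pow]
        ring

theorem exp_one_mul_mul_div_exp_two_div {k ℓ : ℝ} (hk : k ≠ 0) (hℓ : ℓ ≠ 0) :
    exp 1 * ℓ * (k / ℓ / exp 2) / k = exp (-1) := by
  rw [show exp 1 * ℓ * (k / ℓ / exp 2) / k = exp 1 / exp 2 by field_simp, ← exp_sub]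
  norm_num

/-- Let `X ∼ Beta(γℓ, ℓ - γℓ)` where `k = γℓ` is a positive integer,
`γ = k/ℓ ∈ (0,1)`, and let `t = γ/e²`.  Then
`P{X ≤ t} ≤ (tℓ)^(γℓ)/(γℓ)! ≤ (eℓt/(γℓ))^(γℓ) ≤ e^{-γℓ}`. -/
theorem stmt4 (k ℓ : ℕ) (hk : 1 ≤ k) (hkℓ : k < ℓ) :
    betaMeasure k (ℓ - k) {x | x ≤ ((k : ℝ) / ℓ) / Real.exp 2} ≤
        ENNReal.ofReal (((((k : ℝ) / ℓ) / Real.exp 2) * ℓ) ^ k / (Nat.factorial k : ℝ)) ∧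
    ((((k : ℝ) / ℓ) / Real.exp 2) * ℓ) ^ k / (Nat.factorial k : ℝ) ≤
        (Real.exp 1 * ℓ * (((k : ℝ) / ℓ) / Real.exp 2) / k) ^ k ∧
    (Real.exp 1 * ℓ * (((k : ℝ) / ℓ) / Real.exp 2) / k) ^ k ≤ Real.exp (-(k : ℝ)) := by
  have ht : 0 ≤ (k : ℝ) / ℓ / exp 2 := by positivity
  have hk0 : (k : ℝ) ≠ 0 := Nat.cast_ne_zero.2 (by omega)
  have hℓ0 : (ℓ : ℝ) ≠ 0 := Nat.cast_ne_zero.2 (by omega)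
  refine ⟨?_, ?_, ?_⟩
  · have := betaMeasure_Iic_le_pow_div_factorial hk (Nat.sub_pos_of_lt hkℓ) ht
    rwa [Nat.add_sub_cancel' hkℓ.le] at this
  · rw [mul_assoc (exp 1), mul_comm (ℓ : ℝ)]
    exact pow_div_factorial_le_exp_one_mul_div_pow (by positivity) k
  · rw [exp_one_mul_mul_div_exp_two_div hk0 hℓ0, ← exp_nat_mul]
    simp
end

section
/- With $X_t$ as above ($X_\ell = 0$ and $X_j - X_{j-1}$ independent Bernoulli$(1/j)$ for $j > \ell$), for all integers $m > \ell \ge 1$, $\mathbb{E}\big[ e^{\sum_{j=\ell+1}^m (X_j - X_{j-1} - 1/j)} \big] \le \frac{(m+2)^2}{\ell^2} e^{-\sum_{j=\ell+1}^m 1/j}$. -/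
/-!
Since `∑ (B j - 1/j) = ∑ B j - ∑ 1/j`, the left side is `mgf (∑ B j) 1 · exp (-∑ 1/j)`, and by
independence the moment generating function factors. A Bernoulli(`p`) variable has
`mgf 1 = 1 + (e - 1) p ≤ 1 + 2p`, so with `p = 1/j` each factor is at most `(j + 2)/j`, and the
product of these telescopes to `(m + 1)(m + 2)/((ℓ + 1)(ℓ + 2)) ≤ (m + 2)²/ℓ²`.
-/

open MeasureTheory ProbabilityTheory

section ZeroOne

variable {Ω : Type*} [MeasurableSpace Ω] {μ : Measure Ω} {X : Ω → ℝ}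

lemma mgf_eq_of_zero_or_one [IsProbabilityMeasure μ] (hX : Measurable X)
    (h01 : ∀ ω, X ω = 0 ∨ X ω = 1) (t : ℝ) :
    mgf X μ t = 1 + (Real.exp t - 1) * μ.real {ω | X ω = 1} := by
  have hset : MeasurableSet {ω | X ω = 1} := hX (measurableSet_singleton 1)
  have hexp : (fun ω ↦ Real.exp (t * X ω)) =
      fun ω ↦ 1 + {ω | X ω = 1}.indicator (fun _ ↦ Real.exp t - 1) ω := by
    funext ω
    rcases h01 ω with h | h <;> simp [Set.indicator, h]
  rw [mgf, hexp, integral_add (integrable_const 1)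
    ((integrable_const _).indicator hset), integral_indicator_const _ hset]
  simp [mul_comm]

lemma mgf_one_le_of_zero_or_one [IsProbabilityMeasure μ] (hX : Measurable X)
    (h01 : ∀ ω, X ω = 0 ∨ X ω = 1) :
    mgf X μ 1 ≤ 1 + 2 * μ.real {ω | X ω = 1} := by
  rw [mgf_eq_of_zero_or_one hX h01]
  have he : Real.exp 1 - 1 ≤ 2 := by linarith [Real.exp_one_lt_d9]
  gcongr

end ZeroOne

lemma prod_Ioc_add_two_div (ℓ m : ℕ) (h : ℓ ≤ m) :
    ∏ j ∈ Finset.Ioc ℓ m, ((j : ℝ) + 2) / j = ((m : ℝ) + 1) * (m + 2) / ((ℓ + 1) * (ℓ + 2)) := by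
  induction m, h using Nat.le_induction with
  | base => simp [div_self (by positivity : ((ℓ : ℝ) + 1) * (ℓ + 2) ≠ 0)]
  | succ n hn ih =>
    rw [Finset.prod_Ioc_succ_top hn, ih]
    push_cast
    field_simp
    ring

lemma prod_Ioc_add_two_div_le {ℓ m : ℕ} (hℓ : 0 < ℓ) (h : ℓ ≤ m) :
    ∏ j ∈ Finset.Ioc ℓ m, ((j : ℝ) + 2) / j ≤ ((m : ℝ) + 2) ^ 2 / ℓ ^ 2 := by
  rw [prod_Ioc_add_two_div ℓ m h, sq, sq]
  have hℓ' : (0 : ℝ) < ℓ := by exact_mod_cast hℓ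
  gcongr <;> linarith

/-- If `B j` (`ℓ < j ≤ m`) are independent Bernoulli(`1/j`) random variables,
then `E[exp(∑_{j=ℓ+1}^m (B j - 1/j))] ≤ ((m+2)²/ℓ²) · exp(-∑_{j=ℓ+1}^m 1/j)`. -/
theorem stmt7 {Ω : Type*} [MeasurableSpace Ω] (μ : Measure Ω) [IsProbabilityMeasure μ]
    (ℓ m : ℕ) (hℓ : 1 ≤ ℓ) (hm : ℓ < m)
    (B : ℕ → Ω → ℝ) (hmeas : ∀ j, Measurable (B j))
    (hindep : iIndepFun B μ)
    (h01 : ∀ j ω, B j ω = 0 ∨ B j ω = 1)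
    (hp : ∀ j, ℓ < j → j ≤ m → μ {ω | B j ω = 1} = ENNReal.ofReal (1 / (j : ℝ))) :
    ∫ ω, Real.exp (∑ j ∈ Finset.Ioc ℓ m, (B j ω - 1 / j)) ∂μ ≤
      ((m : ℝ) + 2) ^ 2 / (ℓ : ℝ) ^ 2 * Real.exp (-∑ j ∈ Finset.Ioc ℓ m, (1 : ℝ) / j) := by
  have hsplit : ∀ ω, Real.exp (∑ j ∈ Finset.Ioc ℓ m, (B j ω - 1 / j)) =
      Real.exp (1 * (∑ j ∈ Finset.Ioc ℓ m, B j) ω) *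
        Real.exp (-∑ j ∈ Finset.Ioc ℓ m, (1 : ℝ) / j) := fun ω ↦ by
    rw [Finset.sum_sub_distrib, sub_eq_add_neg, Real.exp_add, one_mul, Finset.sum_apply]
  have hfactor : ∀ j ∈ Finset.Ioc ℓ m, mgf (B j) μ 1 ≤ ((j : ℝ) + 2) / j := fun j hj ↦ by
    obtain ⟨hℓj, hjm⟩ := Finset.mem_Ioc.mp hj
    have hj : (0 : ℝ) < j := Nat.cast_pos.mpr (by omega)
    calc mgf (B j) μ 1 ≤ 1 + 2 * μ.real {ω | B j ω = 1} :=
          mgf_one_le_of_zero_or_one (hmeas j) (h01 j)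
      _ = ((j : ℝ) + 2) / j := by
          rw [measureReal_def, hp j hℓj hjm, ENNReal.toReal_ofReal (by positivity)]
          field_simp
  simp_rw [hsplit]
  rw [integral_mul_const, ← mgf, hindep.mgf_sum hmeas]
  gcongr
  calc ∏ j ∈ Finset.Ioc ℓ m, mgf (B j) μ 1 ≤ ∏ j ∈ Finset.Ioc ℓ m, ((j : ℝ) + 2) / j :=
        Finset.prod_le_prod (fun _ _ ↦ mgf_nonneg) hfactor
    _ ≤ ((m : ℝ) + 2) ^ 2 / ℓ ^ 2 := prod_Ioc_add_two_div_le hℓ hm.le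
end

section
/- Let $X_m = \sum_{j=\ell+1}^m B_j$ where the $B_j$ are independent Bernoulli$(1/j)$ random variables. Then for any $\gamma\ell > 0$, $\mathbb{P}\{X_m > \gamma\ell\} \le \frac{(m+2)^2}{\ell^2 e^{\gamma\ell}}$. -/
/-!
Chernoff's bound with `t = 1`: `P(S > c) ≤ e^{-c} E[e^S]`. By independence `E[e^S]` is the product
of the moment generating functions `1 + (e - 1)/j ≤ (1 + 1/j)²` of the Bernoulli(`1/j`) summands,
and `∏_{j=ℓ+1}^m (1 + 1/j)` telescopes to `(m + 1)/(ℓ + 1) ≤ (m + 2)/ℓ`.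
-/

open MeasureTheory ProbabilityTheory Real

theorem Finset.prod_Ioc_one_add_inv (ℓ m : ℕ) (hℓm : ℓ ≤ m) :
    ∏ j ∈ Finset.Ioc ℓ m, (1 + (j : ℝ)⁻¹) = ((m : ℝ) + 1) / ((ℓ : ℝ) + 1) := by
  induction m, hℓm using Nat.le_induction with
  | base => simp [div_self (by positivity : (ℓ : ℝ) + 1 ≠ 0)]
  | succ n hℓn ih =>
    rw [Finset.prod_Ioc_succ_top hℓn, ih]
    push_cast
    field_simp

theorem one_add_exp_one_sub_one_mul_le_sq {x : ℝ} (hx : 0 ≤ x) :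
    1 + (exp 1 - 1) * x ≤ (1 + x) ^ 2 := by
  have he : exp 1 - 1 ≤ 2 := by linarith [exp_one_lt_d9]
  nlinarith [sq_nonneg x]

section ZeroOne

variable {Ω : Type*} {X : Ω → ℝ}

theorem indicator_eq_of_zero_or_one (h01 : ∀ ω, X ω = 0 ∨ X ω = 1) :
    {ω | X ω = 1}.indicator 1 = X := by
  funext ω
  rcases h01 ω with h | h <;> simp [Set.indicator, h]

theorem exp_mul_eq_of_zero_or_one (h01 : ∀ ω, X ω = 0 ∨ X ω = 1) (t : ℝ) :
    (fun ω => exp (t * X ω)) = fun ω => 1 + (exp t - 1) * X ω := by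
  funext ω
  rcases h01 ω with h | h <;> simp [h]

variable [MeasurableSpace Ω] {μ : Measure Ω}

theorem integrable_of_zero_or_one [IsFiniteMeasure μ] (hX : Measurable X)
    (h01 : ∀ ω, X ω = 0 ∨ X ω = 1) : Integrable X μ := by
  rw [← indicator_eq_of_zero_or_one h01]
  exact (integrable_const 1).indicator (hX (measurableSet_singleton 1))

theorem integral_eq_measureReal_of_zero_or_one [IsFiniteMeasure μ] (hX : Measurable X)
    (h01 : ∀ ω, X ω = 0 ∨ X ω = 1) : μ[X] = μ.real {ω | X ω = 1} := by
  conv_lhs => rw [← indicator_eq_of_zero_or_one h01]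
  have hs : MeasurableSet {ω | X ω = 1} := hX (measurableSet_singleton 1)
  rw [Pi.one_def, integral_indicator_const (1 : ℝ) hs, smul_eq_mul, mul_one]

theorem integrable_exp_mul_of_zero_or_one [IsFiniteMeasure μ] (hX : Measurable X)
    (h01 : ∀ ω, X ω = 0 ∨ X ω = 1) (t : ℝ) : Integrable (fun ω => exp (t * X ω)) μ := by
  rw [exp_mul_eq_of_zero_or_one h01]
  exact (integrable_const 1).add ((integrable_of_zero_or_one hX h01).const_mul _)

theorem mgf_of_zero_or_one [IsProbabilityMeasure μ] (hX : Measurable X)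
    (h01 : ∀ ω, X ω = 0 ∨ X ω = 1) (t : ℝ) :
    mgf X μ t = 1 + (exp t - 1) * μ.real {ω | X ω = 1} := by
  rw [mgf, exp_mul_eq_of_zero_or_one h01,
    integral_add (integrable_const 1) ((integrable_of_zero_or_one hX h01).const_mul _),
    integral_const_mul, integral_eq_measureReal_of_zero_or_one hX h01]
  simp

end ZeroOne

theorem mgf_sum_Ioc_bernoulli_inv_le {Ω : Type*} [MeasurableSpace Ω] {μ : Measure Ω}
    [IsProbabilityMeasure μ] {ℓ m : ℕ} (hℓm : ℓ ≤ m) {B : ℕ → Ω → ℝ}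
    (hmeas : ∀ j, Measurable (B j)) (hindep : iIndepFun B μ)
    (h01 : ∀ j ω, B j ω = 0 ∨ B j ω = 1)
    (hp : ∀ j, ℓ < j → j ≤ m → μ {ω | B j ω = 1} = ENNReal.ofReal (1 / (j : ℝ))) :
    mgf (∑ j ∈ Finset.Ioc ℓ m, B j) μ 1 ≤ (((m : ℝ) + 1) / ((ℓ : ℝ) + 1)) ^ 2 := by
  have hfactor : ∀ j ∈ Finset.Ioc ℓ m, mgf (B j) μ 1 ≤ (1 + (j : ℝ)⁻¹) ^ 2 := by
    intro j hj
    obtain ⟨hℓj, hjm⟩ := Finset.mem_Ioc.mp hj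
    rw [mgf_of_zero_or_one (hmeas j) (h01 j), measureReal_def, hp j hℓj hjm,
      ENNReal.toReal_ofReal (by positivity), one_div]
    exact one_add_exp_one_sub_one_mul_le_sq (by positivity)
  calc mgf (∑ j ∈ Finset.Ioc ℓ m, B j) μ 1
      = ∏ j ∈ Finset.Ioc ℓ m, mgf (B j) μ 1 := hindep.mgf_sum hmeas _
    _ ≤ ∏ j ∈ Finset.Ioc ℓ m, (1 + (j : ℝ)⁻¹) ^ 2 :=
      Finset.prod_le_prod (fun _ _ => mgf_nonneg) hfactor
    _ = (((m : ℝ) + 1) / ((ℓ : ℝ) + 1)) ^ 2 := by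
      rw [Finset.prod_pow, Finset.prod_Ioc_one_add_inv ℓ m hℓm]

theorem stmt8_general {Ω : Type*} [MeasurableSpace Ω] (μ : Measure Ω) [IsProbabilityMeasure μ]
    (ℓ m : ℕ) (hℓ : 1 ≤ ℓ) (hm : ℓ < m)
    (B : ℕ → Ω → ℝ) (hmeas : ∀ j, Measurable (B j))
    (hindep : iIndepFun B μ)
    (h01 : ∀ j ω, B j ω = 0 ∨ B j ω = 1)
    (hp : ∀ j, ℓ < j → j ≤ m → μ {ω | B j ω = 1} = ENNReal.ofReal (1 / (j : ℝ)))
    (c : ℝ) :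
    μ {ω | c < ∑ j ∈ Finset.Ioc ℓ m, B j ω} ≤
      ENNReal.ofReal (((m : ℝ) + 2) ^ 2 / ((ℓ : ℝ) ^ 2 * Real.exp c)) := by
  set S := ∑ j ∈ Finset.Ioc ℓ m, B j
  have hchernoff : μ.real {ω | c ≤ S ω} ≤ exp (-1 * c) * mgf S μ 1 :=
    measure_ge_le_exp_mul_mgf c zero_le_one <| hindep.integrable_exp_mul_sum hmeas
      fun j _ => integrable_exp_mul_of_zero_or_one (hmeas j) (h01 j) 1
  have hmgf := mgf_sum_Ioc_bernoulli_inv_le hm.le hmeas hindep h01 hp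
  have hratio : ((m : ℝ) + 1) / ((ℓ : ℝ) + 1) ≤ ((m : ℝ) + 2) / ℓ := by
    have : (1 : ℝ) ≤ ℓ := by exact_mod_cast hℓ
    rw [div_le_div_iff₀ (by positivity) (by positivity)]
    nlinarith
  calc μ {ω | c < ∑ j ∈ Finset.Ioc ℓ m, B j ω}
      ≤ μ {ω | c ≤ S ω} := measure_mono fun ω hω => by simpa [S] using hω.le
    _ = ENNReal.ofReal (μ.real {ω | c ≤ S ω}) := (ofReal_measureReal (measure_ne_top μ _)).symm
    _ ≤ ENNReal.ofReal (((m : ℝ) + 2) ^ 2 / ((ℓ : ℝ) ^ 2 * exp c)) := by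
      refine ENNReal.ofReal_le_ofReal (hchernoff.trans ?_)
      calc exp (-1 * c) * mgf S μ 1 ≤ exp (-1 * c) * (((m : ℝ) + 2) / ℓ) ^ 2 := by
            gcongr
            exact hmgf.trans (pow_le_pow_left₀ (by positivity) hratio 2)
        _ = ((m : ℝ) + 2) ^ 2 / ((ℓ : ℝ) ^ 2 * exp c) := by
            rw [neg_one_mul, exp_neg]
            field_simp

/-- Let `X_m = ∑_{j=ℓ+1}^m B j` where the `B j` are independent
Bernoulli(`1/j`) random variables.  Then for any `γℓ > 0` (denoted `c` below),
`P{X_m > γℓ} ≤ (m+2)²/(ℓ² e^{γℓ})`. -/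
theorem stmt8 {Ω : Type*} [MeasurableSpace Ω] (μ : Measure Ω) [IsProbabilityMeasure μ]
    (ℓ m : ℕ) (hℓ : 1 ≤ ℓ) (hm : ℓ < m)
    (B : ℕ → Ω → ℝ) (hmeas : ∀ j, Measurable (B j))
    (hindep : iIndepFun B μ)
    (h01 : ∀ j ω, B j ω = 0 ∨ B j ω = 1)
    (hp : ∀ j, ℓ < j → j ≤ m → μ {ω | B j ω = 1} = ENNReal.ofReal (1 / (j : ℝ)))
    (c : ℝ) (hc : 0 < c) :
    μ {ω | c < ∑ j ∈ Finset.Ioc ℓ m, B j ω} ≤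
      ENNReal.ofReal (((m : ℝ) + 2) ^ 2 / ((ℓ : ℝ) ^ 2 * Real.exp c)) :=
  stmt8_general μ ℓ m hℓ hm B hmeas hindep h01 hp c
end

section
/- Let $S_k$ denote the number of singleton-parents (vertices whose set of children is a single leaf) in a uniform random recursive tree $T_k$, and $L_k$ the number of leaves. Then $\mathbb{E}[S_{k+1} \mid T_k] = (1 - 2/k) S_k + L_k/k$, and consequently $\mathbb{E} S_\ell = \ell/6$ for all $\ell \ge$ some small initial value where the recursion and $\mathbb{E} L_k = k/2$ hold. -/
open MeasureTheory
open scoped Classical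

/-- The parent map of a recursive tree on vertices `0,1,…` encoded by attachment choices
`a`: vertex `w` (for `1 ≤ w ≤ m`) is attached to the earlier vertex `a ⟨w-1⟩ ∈ {0,…,w-1}`;
the root `0` is mapped to itself. -/
def parentFun (m : ℕ) (a : ∀ i : Fin m, Fin ((i : ℕ) + 1)) : ℕ → ℕ := fun w =>
  if h : w - 1 < m then (a ⟨w - 1, h⟩ : ℕ) else 0

/-- The children of `v` among the vertices `{1,…,n-1}` under parent map `par`. -/
def childrenF (n : ℕ) (par : ℕ → ℕ) (v : ℕ) : Finset ℕ :=
  (Finset.Ioo 0 n).filter fun w => par w = v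

/-- The number of leaves (non-root vertices with no children) of the tree on `{0,…,n-1}`. -/
noncomputable def leafCount (n : ℕ) (par : ℕ → ℕ) : ℕ :=
  ((Finset.range n).filter fun v => 0 < v ∧ childrenF n par v = ∅).card

/-- The number `S` of singleton-parents: vertices whose set of children is a single leaf. -/
noncomputable def singletonParentCount (n : ℕ) (par : ℕ → ℕ) : ℕ :=
  ((Finset.range n).filter fun v =>
    ∃ d ∈ Finset.range n, childrenF n par v = {d} ∧ childrenF n par d = ∅).card

/-- The uniform random recursive tree on `n` vertices, encoded by its uniform attachment
vector. -/
noncomputable def urrt (n : ℕ) : Measure (∀ i : Fin (n - 1), Fin ((i : ℕ) + 1)) :=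
  (PMF.uniformOfFintype _).toMeasure

/-! When vertex `k` attaches to `v`, a singleton-parent `u` of `T_k` survives unless `v = u` or
`v` is the unique child of `u`, and the only new singleton-parent is `v` itself, exactly when `v`
is a leaf. Summing over the `k` choices of `v` gives `(k - 2) S_k + L_k`; similarly the leaves
sum to `(k - 1) L_k + k`. Averaging these conditional expectations over the uniform attachment
vector gives `E L_k = k/2` and then `E S_k = k/6` by induction. The induction for `S` starts at
`k = 3` without knowing `E S_2`, because the coefficient `1 - 2/k` vanishes at `k = 2`. -/

open Finset
open scoped BigOperators

def attachLeaf (par : ℕ → ℕ) (k v : ℕ) : ℕ → ℕ := fun w => if w = k then v else par w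

def IsSingletonParent (n : ℕ) (par : ℕ → ℕ) (u : ℕ) : Prop :=
  ∃ d ∈ range n, childrenF n par u = {d} ∧ childrenF n par d = ∅

section Children

variable {n : ℕ} {par : ℕ → ℕ}

lemma mem_childrenF {u w : ℕ} : w ∈ childrenF n par u ↔ 0 < w ∧ w < n ∧ par w = u := by
  simp [childrenF, and_assoc]

lemma childrenF_eq_empty_of_le (hpar : ∀ w, 1 ≤ w → w < n → par w < w) {u : ℕ} (hu : n ≤ u) :
    childrenF n par u = ∅ := by
  ext w
  simp only [mem_childrenF, notMem_empty, iff_false]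
  rintro ⟨hw, hwn, rfl⟩
  have := hpar w hw hwn
  omega

lemma one_mem_childrenF_zero (hpar : ∀ w, 1 ≤ w → w < n → par w < w) (hn : 2 ≤ n) :
    1 ∈ childrenF n par 0 := by
  have := hpar 1 le_rfl hn
  rw [mem_childrenF]
  omega

lemma leafCount_eq_card_childless (hpar : ∀ w, 1 ≤ w → w < n → par w < w) (hn : 2 ≤ n) :
    leafCount n par = #{u ∈ range n | childrenF n par u = ∅} := by
  refine congrArg card (filter_congr fun u _ => ⟨And.right, fun hu => ⟨?_, hu⟩⟩)
  refine Nat.pos_of_ne_zero fun h0 => ?_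
  simpa [← h0, hu] using one_mem_childrenF_zero hpar hn

lemma isSingletonParent_iff {u : ℕ} :
    IsSingletonParent n par u ↔ ∃ d, childrenF n par u = {d} ∧ childrenF n par d = ∅ := by
  refine ⟨fun ⟨d, _, hd⟩ => ⟨d, hd⟩, fun ⟨d, hu, hd⟩ => ⟨d, ?_, hu, hd⟩⟩
  exact mem_range.2 (mem_childrenF.1 (hu ▸ mem_singleton_self d)).2.1

lemma singletonParentCount_eq_card :
    singletonParentCount n par = #{u ∈ range n | IsSingletonParent n par u} :=
  congrArg card (filter_congr fun _ _ => Iff.rfl)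

end Children

section Attach

variable {k v : ℕ} {par : ℕ → ℕ}

lemma childrenF_attachLeaf (hk : 0 < k) (u : ℕ) :
    childrenF (k + 1) (attachLeaf par k v) u =
      if u = v then insert k (childrenF k par u) else childrenF k par u := by
  ext w
  by_cases hw : w = k <;> split_ifs with hu <;>
    simp [mem_childrenF, attachLeaf, hw, hu, hk] <;> omega

lemma childrenF_attachLeaf_eq_empty_iff (hk : 0 < k) {u : ℕ} :
    childrenF (k + 1) (attachLeaf par k v) u = ∅ ↔ u ≠ v ∧ childrenF k par u = ∅ := by
  rw [childrenF_attachLeaf hk]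
  split_ifs with hu <;> simp [hu]

lemma isSingletonParent_attachLeaf_iff (hpar : ∀ w, 1 ≤ w → w < k → par w < w) (hv : v < k)
    {u : ℕ} :
    IsSingletonParent (k + 1) (attachLeaf par k v) u ↔
      (u = v ∧ childrenF k par u = ∅) ∨
        (u ≠ v ∧ IsSingletonParent k par u ∧ childrenF k par u ≠ {v}) := by
  have hk : 0 < k := by omega
  simp_rw [isSingletonParent_iff, childrenF_attachLeaf_eq_empty_iff hk, childrenF_attachLeaf hk]
  by_cases hu : u = v
  · subst hu
    simp only [if_true, true_and, ne_eq, not_true_eq_false, false_and, or_false]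
    constructor
    · rintro ⟨d, hd, -, -⟩
      refine eq_empty_iff_forall_notMem.2 fun w hw => ?_
      have hwk : w < k := (mem_childrenF.1 hw).2.1
      have hw' : w = d := mem_singleton.1 (hd ▸ mem_insert_of_mem hw)
      have hk' : k = d := mem_singleton.1 (hd ▸ mem_insert_self k _)
      omega
    · intro h
      exact ⟨k, by simp [h], by omega, childrenF_eq_empty_of_le hpar le_rfl⟩
  · simp only [hu, if_false, false_and, false_or, ne_eq, not_false_eq_true, true_and]
    constructor
    · rintro ⟨d, hud, hdv, hd⟩
      exact ⟨⟨d, hud, hd⟩, by simpa [hud] using hdv⟩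
    · rintro ⟨⟨d, hud, hd⟩, hv'⟩
      exact ⟨d, hud, fun h => hv' (h ▸ hud), hd⟩

lemma card_filter_isSingletonParent_attachLeaf (hpar : ∀ w, 1 ≤ w → w < k → par w < w)
    {u : ℕ} (hu : u < k) :
    #{v ∈ range k | IsSingletonParent (k + 1) (attachLeaf par k v) u} =
      (if childrenF k par u = ∅ then 1 else 0) +
        if IsSingletonParent k par u then k - 2 else 0 := by
  by_cases hS : IsSingletonParent k par u
  · obtain ⟨d, hud, hd⟩ := isSingletonParent_iff.1 hS
    obtain ⟨hd0, hdk, rfl⟩ := mem_childrenF.1 (hud ▸ mem_singleton_self d)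
    have hdu : par d < d := hpar d hd0 hdk
    have hfilter : {v ∈ range k | IsSingletonParent (k + 1) (attachLeaf par k v) (par d)} =
        ((range k).erase (par d)).erase d := by
      ext v
      simp only [mem_filter, mem_range, mem_erase]
      by_cases hv : v < k
      · rw [isSingletonParent_attachLeaf_iff hpar hv, hud]
        simp [hS, hv, eq_comm, and_comm]
      · simp [hv]
    rw [hfilter, card_erase_of_mem (by simp [hdk, hdu.ne']), card_erase_of_mem (by simpa),
      card_range]
    simp [hS, hud]
    omega
  · rw [card_filter, sum_congr rfl fun v hv => by
      rw [isSingletonParent_attachLeaf_iff hpar (mem_range.1 hv)]]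
    simp [hS, hu, ite_and]

lemma sum_singletonParentCount_attachLeaf (hpar : ∀ w, 1 ≤ w → w < k → par w < w)
    (hk : 2 ≤ k) :
    ∑ v ∈ range k, singletonParentCount (k + 1) (attachLeaf par k v) =
      (k - 2) * singletonParentCount k par + leafCount k par := by
  have hS : ∀ v ∈ range k, singletonParentCount (k + 1) (attachLeaf par k v) =
      ∑ u ∈ range k, if IsSingletonParent (k + 1) (attachLeaf par k v) u then 1 else 0 := by
    intro v hv
    have hk_not : ¬IsSingletonParent (k + 1) (attachLeaf par k v) k := by
      simp [isSingletonParent_attachLeaf_iff hpar (mem_range.1 hv), isSingletonParent_iff,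
        childrenF_eq_empty_of_le hpar le_rfl, (mem_range.1 hv).ne']
    rw [singletonParentCount_eq_card, card_filter, sum_range_succ, if_neg hk_not, add_zero]
  calc ∑ v ∈ range k, singletonParentCount (k + 1) (attachLeaf par k v)
      = ∑ u ∈ range k, #{v ∈ range k | IsSingletonParent (k + 1) (attachLeaf par k v) u} := by
        rw [sum_congr rfl hS, sum_comm]
        simp only [card_filter]
    _ = ∑ u ∈ range k, ((if childrenF k par u = ∅ then 1 else 0) +
          if IsSingletonParent k par u then k - 2 else 0) :=
        sum_congr rfl fun u hu => card_filter_isSingletonParent_attachLeaf hpar (mem_range.1 hu)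
    _ = (k - 2) * singletonParentCount k par + leafCount k par := by
        rw [sum_add_distrib, ← card_filter, ← sum_filter, sum_const, smul_eq_mul,
          leafCount_eq_card_childless hpar hk, singletonParentCount_eq_card, add_comm, mul_comm]

lemma sum_leafCount_attachLeaf (hpar : ∀ w, 1 ≤ w → w < k → par w < w) (hk : 0 < k) :
    ∑ v ∈ range k, leafCount (k + 1) (attachLeaf par k v) = (k - 1) * leafCount k par + k := by
  have hL : ∀ v ∈ range k, leafCount (k + 1) (attachLeaf par k v) =
      ∑ u ∈ range k, (if 0 < u ∧ u ≠ v ∧ childrenF k par u = ∅ then 1 else 0) + 1 := by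
    intro v hv
    rw [leafCount, card_filter, sum_range_succ]
    simp_rw [childrenF_attachLeaf_eq_empty_iff hk]
    simp [childrenF_eq_empty_of_le hpar le_rfl, hk, (mem_range.1 hv).ne']
  have hcount : ∀ u ∈ range k, ∑ v ∈ range k,
      (if 0 < u ∧ u ≠ v ∧ childrenF k par u = ∅ then 1 else 0) =
        if 0 < u ∧ childrenF k par u = ∅ then k - 1 else 0 := by
    intro u hu
    split_ifs with h
    · simp only [h, true_and, and_true]
      rw [← card_filter, filter_ne, card_erase_of_mem hu, card_range]
    · exact sum_eq_zero fun v _ => if_neg (by tauto)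
  rw [sum_congr rfl hL, sum_add_distrib, sum_comm, sum_congr rfl hcount, ← sum_filter, sum_const,
    smul_eq_mul, sum_const, card_range, smul_eq_mul, mul_one, leafCount, mul_comm]

theorem expect_singletonParentCount_attachLeaf (hpar : ∀ w, 1 ≤ w → w < k → par w < w)
    (hk : 2 ≤ k) :
    𝔼 v ∈ range k, (singletonParentCount (k + 1) (attachLeaf par k v) : ℝ) =
      (1 - 2 / k) * singletonParentCount k par + leafCount k par / k := by
  have hk0 : (k : ℝ) ≠ 0 := Nat.cast_ne_zero.2 (by omega)
  rw [expect_eq_sum_div_card, card_range, ← Nat.cast_sum,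
    sum_singletonParentCount_attachLeaf hpar hk]
  push_cast [Nat.cast_sub hk]
  field_simp

theorem expect_leafCount_attachLeaf (hpar : ∀ w, 1 ≤ w → w < k → par w < w) (hk : 0 < k) :
    𝔼 v ∈ range k, (leafCount (k + 1) (attachLeaf par k v) : ℝ) =
      (1 - 1 / k) * leafCount k par + 1 := by
  have hk0 : (k : ℝ) ≠ 0 := Nat.cast_ne_zero.2 hk.ne'
  rw [expect_eq_sum_div_card, card_range, ← Nat.cast_sum, sum_leafCount_attachLeaf hpar hk]
  push_cast [Nat.cast_sub hk]
  field_simp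

end Attach

lemma integral_uniformOfFintype {α : Type*} [Fintype α] [Nonempty α] [MeasurableSpace α]
    [MeasurableSingletonClass α] (f : α → ℝ) :
    ∫ a, f a ∂(PMF.uniformOfFintype α).toMeasure = 𝔼 a, f a := by
  rw [integral_fintype .of_finite, Fintype.expect_eq_sum_div_card, sum_div]
  refine sum_congr rfl fun a _ => ?_
  simp [measureReal_def, div_eq_inv_mul]

abbrev AttachmentVector (m : ℕ) := ∀ i : Fin m, Fin ((i : ℕ) + 1)

section RandomRecursiveTree

variable {m : ℕ}

lemma parentFun_lt (a : AttachmentVector m) : ∀ w, 1 ≤ w → w < m + 1 → parentFun m a w < w := by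
  intro w hw _
  unfold parentFun
  split_ifs with h
  · have := (a ⟨w - 1, h⟩).is_lt
    simp only at this
    omega
  · omega

lemma parentFun_snoc (a : AttachmentVector m) (v : Fin (m + 1)) :
    parentFun (m + 1) (Fin.snoc (α := fun i : Fin (m + 1) => Fin ((i : ℕ) + 1)) a v) =
      attachLeaf (parentFun m a) (m + 1) v := by
  funext w
  simp only [parentFun, attachLeaf]
  split_ifs with h1 hw h2 <;> try omega
  · subst hw
    simp [Fin.snoc]
  · simp [Fin.snoc, h2]

lemma expect_parentFun_succ (f : (ℕ → ℕ) → ℝ) :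
    𝔼 a : AttachmentVector (m + 1), f (parentFun (m + 1) a) =
      𝔼 a : AttachmentVector m, 𝔼 v ∈ range (m + 1), f (attachLeaf (parentFun m a) (m + 1) v) := by
  rw [← Fintype.expect_equiv (Fin.snocEquiv _) _ _ fun _ => rfl, ← univ_product_univ,
    expect_product, expect_comm, ← image_fin_univ]
  simp_rw [expect_image Fin.val_injective.injOn]
  simp only [Fin.snocEquiv, Equiv.coe_fn_mk, parentFun_snoc]
  rfl

lemma expect_leafCount_parentFun_succ :
    𝔼 a : AttachmentVector (m + 1), (leafCount (m + 2) (parentFun (m + 1) a) : ℝ) =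
      (1 - 1 / ((m + 1 : ℕ) : ℝ)) *
          𝔼 a : AttachmentVector m, (leafCount (m + 1) (parentFun m a) : ℝ) + 1 := by
  rw [expect_parentFun_succ fun par => (leafCount (m + 2) par : ℝ),
    expect_congr rfl fun a _ => expect_leafCount_attachLeaf (parentFun_lt a) m.succ_pos,
    expect_add_distrib, Fintype.expect_const, mul_expect]

lemma expect_singletonParentCount_parentFun_succ (hm : 1 ≤ m) :
    𝔼 a : AttachmentVector (m + 1), (singletonParentCount (m + 2) (parentFun (m + 1) a) : ℝ) =
      (1 - 2 / ((m + 1 : ℕ) : ℝ)) *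
          𝔼 a : AttachmentVector m, (singletonParentCount (m + 1) (parentFun m a) : ℝ) +
        (𝔼 a : AttachmentVector m, (leafCount (m + 1) (parentFun m a) : ℝ)) /
          ((m + 1 : ℕ) : ℝ) := by
  rw [expect_parentFun_succ fun par => (singletonParentCount (m + 2) par : ℝ),
    expect_congr rfl fun a _ =>
      expect_singletonParentCount_attachLeaf (parentFun_lt a) (Nat.succ_le_succ hm),
    expect_add_distrib, mul_expect, expect_div]

end RandomRecursiveTree

theorem expect_leafCount_parentFun (m : ℕ) :
    𝔼 a : AttachmentVector (m + 1), (leafCount (m + 2) (parentFun (m + 1) a) : ℝ) =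
      (m + 2) / 2 := by
  induction m with
  | zero => simp [expect_leafCount_parentFun_succ]
  | succ m ih =>
    rw [expect_leafCount_parentFun_succ, ih]
    push_cast
    field_simp
    ring

theorem expect_singletonParentCount_parentFun (m : ℕ) :
    𝔼 a : AttachmentVector (m + 2), (singletonParentCount (m + 3) (parentFun (m + 2) a) : ℝ) =
      (m + 3) / 6 := by
  induction m with
  | zero =>
    rw [expect_singletonParentCount_parentFun_succ le_rfl, expect_leafCount_parentFun 0]
    norm_num
  | succ m ih =>
    rw [expect_singletonParentCount_parentFun_succ (by omega), ih,
      expect_leafCount_parentFun (m + 1)]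
    push_cast
    field_simp
    ring

/-- Let `S_k` be the number of singleton-parents and `L_k` the number of
leaves of a uniform random recursive tree `T_k`.  Conditionally on `T_k` (i.e., for every
fixed recursive tree on `k ≥ 2` vertices, averaging over the uniform attachment of vertex
`k+1`), `E[S_{k+1} | T_k] = (1 - 2/k) S_k + L_k/k`; consequently `E S_ℓ = ℓ/6` for all
`ℓ ≥ 3`. -/
theorem stmt14 :
    (∀ (k : ℕ) (par : ℕ → ℕ), 2 ≤ k → (∀ w, 1 ≤ w → w < k → par w < w) →
      (1 / (k : ℝ)) * ∑ v ∈ Finset.range k,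
          (singletonParentCount (k + 1) (fun w => if w = k then v else par w) : ℝ) =
        (1 - 2 / (k : ℝ)) * (singletonParentCount k par : ℝ) + (leafCount k par : ℝ) / k) ∧
    (∀ ℓ : ℕ, 3 ≤ ℓ →
      (∫ a, (singletonParentCount ℓ (parentFun (ℓ - 1) a) : ℝ) ∂urrt ℓ) = (ℓ : ℝ) / 6) := by
  refine ⟨fun k par hk hpar => ?_, fun ℓ hℓ => ?_⟩
  · have h := expect_singletonParentCount_attachLeaf hpar hk
    rw [expect_eq_sum_div_card, card_range, ← one_div_mul_eq_div] at h
    exact h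
  · obtain ⟨m, rfl⟩ : ∃ m, ℓ = m + 3 := ⟨ℓ - 3, by omega⟩
    rw [urrt, integral_uniformOfFintype]
    exact_mod_cast expect_singletonParentCount_parentFun m
end
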